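/- Let δ(x) be the piecewise constant bump function equal to δ₀+ε₀ on [−d₀/2, d₀/2] and δ₀ elsewhere, with D > 0. Then the function Δ₀(x) defined piecewise by Δ₀(x) = δ₀ + (ε₀/2)(e^{d₀/(2√D)} − e^{−d₀/(2√D)})e^{x/√D} for x ≤ −d₀/2, Δ₀(x) = δ₀ + ε₀ − (ε₀/2)e^{−d₀/(2√D)}(e^{x/√D} + e^{−x/√D}) for −d₀/2 < x ≤ d₀/2, and Δ₀(x) = δ₀ + (ε₀/2)(e^{d₀/(2√D)} − e^{−d₀/(2√D)})e^{−x/√D} for x ≥ d₀/2, is a bounded C¹ function satisfying D·Δ₀''(x) − Δ₀(x) + δ(x) = 0 on each of the three open intervals, and Δ₀ and Δ₀' are continuous at x = ±d₀/2. -/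

import Mathlib

/-- The piecewise constant bump heterogeneity. -/
noncomputable def bumpDelta (δ₀ ε₀ d₀ : ℝ) : ℝ → ℝ :=
  fun x => if -d₀ / 2 ≤ x ∧ x ≤ d₀ / 2 then δ₀ + ε₀ else δ₀

/-- The explicit piecewise solution Δ₀ of D·Δ₀'' − Δ₀ + δ(x) = 0. -/
noncomputable def bumpSol (D δ₀ ε₀ d₀ : ℝ) : ℝ → ℝ := fun x =>
  if x ≤ -d₀ / 2 then
    δ₀ + ε₀ / 2 * (Real.exp (d₀ / (2 * Real.sqrt D)) - Real.exp (-d₀ / (2 * Real.sqrt D)))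
      * Real.exp (x / Real.sqrt D)
  else if x ≤ d₀ / 2 then
    δ₀ + ε₀ - ε₀ / 2 * Real.exp (-d₀ / (2 * Real.sqrt D))
      * (Real.exp (x / Real.sqrt D) + Real.exp (-x / Real.sqrt D))
  else
    δ₀ + ε₀ / 2 * (Real.exp (d₀ / (2 * Real.sqrt D)) - Real.exp (-d₀ / (2 * Real.sqrt D)))
      * Real.exp (-x / Real.sqrt D)

/-!
Write `Δ₀(x) = δ₀ + (ε₀/2)(g(x - d₀/2) + g(-x - d₀/2) - 2)`, where `g = expStep √D`
is `2 - e^{t/√D}` for `t ≤ 0` and `e^{-t/√D}` for `t > 0`. Both branches of `g` have value `1`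
and slope `-1/√D` at `0`, so `g` is C¹; it takes values in `[0, 2]`; and away from `0` it
solves `D g'' = g - 2·[t < 0]`. These properties pass to `Δ₀`, and the jump terms of the two
reflected copies of `g` add up to the bump `δ`.
-/

open Real Set

section Piecewise

variable {E : Type*} [NormedAddCommGroup E] [NormedSpace ℝ E]
  {f g : ℝ → E} {f' g' : E} {a t : ℝ}

theorem hasDerivAt_ite_le_of_ne (hf : HasDerivAt f f' t) (hg : HasDerivAt g g' t)
    (ht : t ≠ a) :
    HasDerivAt (fun u => if u ≤ a then f u else g u) (if t ≤ a then f' else g') t := by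
  rcases ht.lt_or_gt with ht | ht
  · rw [if_pos ht.le]
    refine hf.congr_of_eventuallyEq ?_
    filter_upwards [Iio_mem_nhds ht] with u hu
    rw [if_pos (le_of_lt hu)]
  · rw [if_neg ht.not_ge]
    refine hg.congr_of_eventuallyEq ?_
    filter_upwards [Ioi_mem_nhds ht] with u hu
    rw [if_neg (not_le.mpr hu)]

theorem hasDerivAt_ite_le_self (hf : HasDerivAt f f' a) (hg : HasDerivAt g f' a)
    (hfg : f a = g a) : HasDerivAt (fun u => if u ≤ a then f u else g u) f' a := by
  have hle : HasDerivWithinAt (fun u => if u ≤ a then f u else g u) f' (Iic a) a :=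
    hf.hasDerivWithinAt.congr (fun u hu => if_pos hu) (if_pos le_rfl)
  have hge : HasDerivWithinAt (fun u => if u ≤ a then f u else g u) f' (Ici a) a := by
    refine hg.hasDerivWithinAt.congr (fun u hu => ?_) (by rw [if_pos le_rfl, hfg])
    rcases (mem_Ici.mp hu).eq_or_lt with rfl | hu
    · rw [if_pos le_rfl, hfg]
    · rw [if_neg hu.not_ge]
  simpa only [Iic_union_Ici, hasDerivWithinAt_univ] using hle.union hge

end Piecewise

theorem hasDerivAt_comp_sub_add_comp_neg_sub {f : ℝ → ℝ} {f₁ f₂ a x : ℝ}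
    (h₁ : HasDerivAt f f₁ (x - a)) (h₂ : HasDerivAt f f₂ (-x - a)) :
    HasDerivAt (fun y => f (y - a) + f (-y - a)) (f₁ - f₂) x :=
  ((h₁.comp_sub_const x a).add (h₂.comp x ((hasDerivAt_neg' x).sub_const a))).congr_deriv
    (by ring)

theorem hasDerivAt_comp_sub_sub_comp_neg_sub {f : ℝ → ℝ} {f₁ f₂ a x : ℝ}
    (h₁ : HasDerivAt f f₁ (x - a)) (h₂ : HasDerivAt f f₂ (-x - a)) :
    HasDerivAt (fun y => f (y - a) - f (-y - a)) (f₁ + f₂) x :=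
  ((h₁.comp_sub_const x a).sub (h₂.comp x ((hasDerivAt_neg' x).sub_const a))).congr_deriv
    (by ring)

noncomputable def expStep (s t : ℝ) : ℝ :=
  if t ≤ 0 then 2 - exp (t / s) else exp (-t / s)

theorem hasDerivAt_expStep (s t : ℝ) :
    HasDerivAt (expStep s) (if t ≤ 0 then -exp (t / s) / s else -exp (-t / s) / s) t := by
  have hl : ∀ u, HasDerivAt (fun u => 2 - exp (u / s)) (-exp (u / s) / s) u := fun u => by
    simpa [div_eq_mul_inv] using (((hasDerivAt_id u).div_const s).exp).const_sub 2
  have hr : ∀ u, HasDerivAt (fun u => exp (-u / s)) (-exp (-u / s) / s) u := fun u => by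
    simpa [div_eq_mul_inv] using (((hasDerivAt_id u).neg.div_const s).exp)
  rcases eq_or_ne t 0 with rfl | ht
  · rw [if_pos le_rfl]
    exact hasDerivAt_ite_le_self (hl 0) (by simpa using hr 0) (by norm_num)
  · exact hasDerivAt_ite_le_of_ne (hl t) (hr t) ht

theorem deriv_expStep (s : ℝ) :
    deriv (expStep s) = fun t => if t ≤ 0 then -exp (t / s) / s else -exp (-t / s) / s :=
  funext fun t => (hasDerivAt_expStep s t).deriv

theorem differentiable_expStep (s : ℝ) : Differentiable ℝ (expStep s) :=
  fun t => (hasDerivAt_expStep s t).differentiableAt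

theorem contDiff_expStep (s : ℝ) : ContDiff ℝ 1 (expStep s) := by
  rw [contDiff_one_iff_deriv, deriv_expStep]
  refine ⟨differentiable_expStep s, ?_⟩
  refine Continuous.if_le (by fun_prop) (by fun_prop) continuous_id continuous_const ?_
  rintro t rfl
  simp

theorem hasDerivAt_deriv_expStep (s : ℝ) {t : ℝ} (ht : t ≠ 0) :
    HasDerivAt (deriv (expStep s)) ((expStep s t - if t < 0 then 2 else 0) / s ^ 2) t := by
  have hl : HasDerivAt (fun u => -exp (u / s) / s) (-exp (t / s) / s ^ 2) t :=
    (((hasDerivAt_id' t).div_const s).exp.neg.div_const s).congr_deriv (by ring)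
  have hr : HasDerivAt (fun u => -exp (-u / s) / s) (exp (-t / s) / s ^ 2) t :=
    (((hasDerivAt_neg' t).div_const s).exp.neg.div_const s).congr_deriv (by ring)
  rw [deriv_expStep]
  refine (hasDerivAt_ite_le_of_ne hl hr ht).congr_deriv ?_
  rcases ht.lt_or_gt with ht | ht
  · simp [expStep, ht, ht.le]
  · simp [expStep, ht.not_ge, ht.not_gt]

theorem expStep_mem_Icc {s : ℝ} (hs : 0 ≤ s) (t : ℝ) : expStep s t ∈ Icc 0 2 := by
  unfold expStep
  split_ifs with ht
  · have : exp (t / s) ≤ 1 := exp_le_one_iff.mpr (div_nonpos_of_nonpos_of_nonneg ht hs)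
    constructor <;> linarith [exp_pos (t / s)]
  · have : exp (-t / s) ≤ 1 :=
      exp_le_one_iff.mpr (div_nonpos_of_nonpos_of_nonneg (by linarith) hs)
    constructor <;> linarith [exp_pos (-t / s)]

theorem bumpSol_eq_expStep (D δ₀ ε₀ : ℝ) {d₀ : ℝ} (hd : 0 ≤ d₀) :
    bumpSol D δ₀ ε₀ d₀ = fun x =>
      δ₀ + ε₀ / 2 * (expStep (√D) (x - d₀ / 2) + expStep (√D) (-x - d₀ / 2) - 2) := by
  funext x
  unfold bumpSol expStep
  split_ifs <;> try (exfalso; linarith)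
  · obtain rfl : x = -d₀ / 2 := by linarith
    simp only [sub_div, neg_div, div_div, neg_neg, exp_sub, exp_neg]
    field_simp
    ring
  all_goals simp only [sub_div, neg_div, div_div, neg_sub, exp_sub, exp_neg]
  all_goals field_simp
  all_goals ring

section BumpSol

variable {D δ₀ ε₀ d₀ : ℝ}

theorem contDiff_bumpSol (hd : 0 ≤ d₀) : ContDiff ℝ 1 (bumpSol D δ₀ ε₀ d₀) := by
  have := contDiff_expStep (√D)
  rw [bumpSol_eq_expStep D δ₀ ε₀ hd]
  fun_prop

theorem abs_bumpSol_le (hd : 0 ≤ d₀) (x : ℝ) : |bumpSol D δ₀ ε₀ d₀ x| ≤ |δ₀| + |ε₀| := by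
  obtain ⟨h₁, h₁'⟩ := expStep_mem_Icc (sqrt_nonneg D) (x - d₀ / 2)
  obtain ⟨h₂, h₂'⟩ := expStep_mem_Icc (sqrt_nonneg D) (-x - d₀ / 2)
  have hsum : |expStep (√D) (x - d₀ / 2) + expStep (√D) (-x - d₀ / 2) - 2| ≤ 2 :=
    abs_le.mpr (by constructor <;> linarith)
  calc |bumpSol D δ₀ ε₀ d₀ x|
      ≤ |δ₀| + |ε₀| / 2 * |expStep (√D) (x - d₀ / 2) + expStep (√D) (-x - d₀ / 2) - 2| := by
        rw [bumpSol_eq_expStep D δ₀ ε₀ hd]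
        refine (abs_add_le _ _).trans_eq ?_
        rw [abs_mul, abs_div, abs_two]
    _ ≤ |δ₀| + |ε₀| := by nlinarith [abs_nonneg ε₀]

theorem bumpSol_ode (hD : 0 < D) (hd : 0 ≤ d₀) {x : ℝ} (hx₁ : x ≠ -d₀ / 2)
    (hx₂ : x ≠ d₀ / 2) :
    D * deriv (deriv (bumpSol D δ₀ ε₀ d₀)) x - bumpSol D δ₀ ε₀ d₀ x
      + bumpDelta δ₀ ε₀ d₀ x = 0 := by
  have hpos : x - d₀ / 2 ≠ 0 := sub_ne_zero.mpr hx₂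
  have hneg : -x - d₀ / 2 ≠ 0 := fun h => hx₁ (by linarith)
  have hfirst : deriv (bumpSol D δ₀ ε₀ d₀) = fun y =>
      ε₀ / 2 * (deriv (expStep √D) (y - d₀ / 2) - deriv (expStep √D) (-y - d₀ / 2)) := by
    funext y
    rw [bumpSol_eq_expStep D δ₀ ε₀ hd]
    have hg := hasDerivAt_comp_sub_add_comp_neg_sub
      ((differentiable_expStep √D (y - d₀ / 2)).hasDerivAt)
      ((differentiable_expStep √D (-y - d₀ / 2)).hasDerivAt)
    exact ((((hg.sub_const 2).const_mul (ε₀ / 2)).const_add δ₀).congr_deriv (by ring)).deriv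
  have hsecond := (hasDerivAt_comp_sub_sub_comp_neg_sub
    (hasDerivAt_deriv_expStep √D hpos) (hasDerivAt_deriv_expStep √D hneg)).const_mul (ε₀ / 2)
  rw [hfirst, hsecond.deriv, bumpSol_eq_expStep D δ₀ ε₀ hd, bumpDelta, sq_sqrt hD.le]
  have hD0 : D ≠ 0 := hD.ne'
  -- Away from `±d₀/2`, `[x < d₀/2] + [-x < d₀/2] = 1 + [|x| ≤ d₀/2]`.
  split_ifs <;> first | (exfalso; grind) | (field_simp; ring)

end BumpSol

/-- Δ₀ is a bounded C¹ function satisfying D·Δ₀'' − Δ₀ + δ(x) = 0 on each of the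
three open intervals determined by x = ±d₀/2. -/
theorem stmt8 (D δ₀ ε₀ d₀ : ℝ) (hD : 0 < D) (hd : 0 < d₀) :
    ContDiff ℝ 1 (bumpSol D δ₀ ε₀ d₀) ∧
    (∃ C : ℝ, ∀ x : ℝ, |bumpSol D δ₀ ε₀ d₀ x| ≤ C) ∧
    (∀ x : ℝ, (x < -d₀ / 2 ∨ (-d₀ / 2 < x ∧ x < d₀ / 2) ∨ d₀ / 2 < x) →
      D * deriv (deriv (bumpSol D δ₀ ε₀ d₀)) x - bumpSol D δ₀ ε₀ d₀ x
        + bumpDelta δ₀ ε₀ d₀ x = 0) := by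
  refine ⟨contDiff_bumpSol hd.le, ⟨|δ₀| + |ε₀|, abs_bumpSol_le hd.le⟩,
    fun x hx => bumpSol_ode hD hd.le ?_ ?_⟩ <;>
  · rintro rfl
    rcases hx with hx | ⟨hx, hx'⟩ | hx <;> linarith
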